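/- arXiv:2006.12491 — 4 statements merged into one kernel-verified Lean document; each statement's English description precedes it below -/
import Mathlib

section
/- Let B be an n×n real constant row-sum matrix (n ≥ 2) with Be = λe. Then every complex eigenvalue μ of B with μ ≠ λ lies in the Gershgorin region of the second type of B^T. -/
open Matrix
open scoped ENNReal

/-- Non-increasing (descending) sort of a list of reals. -/
noncomputable def sortDesc (l : List ℝ) : List ℝ := (l.insertionSort (· ≤ ·)).reverse

/-- Given the descending rearrangement `l` of `n` numbers, the sum of the largest
(about) half minus the sum of the smallest (about) half, skipping the middle
element when `n` is odd. -/
noncomputable def halfSumDiff (n : ℕ) (l : List ℝ) : ℝ :=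
  if n % 2 = 1 then (l.take ((n - 1) / 2)).sum - (l.drop ((n + 1) / 2)).sum
  else (l.take (n / 2)).sum - (l.drop (n / 2)).sum

/-- Radius of the `i`-th Gershgorin disc of the second type of `M`, computed from
the `i`-th row of `M` with the diagonal entry replaced by `0`. -/
noncomputable def secondTypeRadius {n : ℕ} (M : Matrix (Fin n) (Fin n) ℝ) (i : Fin n) : ℝ :=
  halfSumDiff n (sortDesc (List.ofFn fun j : Fin n => if j = i then 0 else M i j))

/-- The `i`-th Gershgorin disc of the second type of `M`. -/
noncomputable def secondTypeDisc {n : ℕ} (M : Matrix (Fin n) (Fin n) ℝ) (i : Fin n) : Set ℂ :=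
  Metric.closedBall ((M i i : ℝ) : ℂ) (secondTypeRadius M i)

/-- The Gershgorin region of the second type of `M`. -/
noncomputable def secondTypeRegion {n : ℕ} (M : Matrix (Fin n) (Fin n) ℝ) : Set ℂ :=
  ⋃ i : Fin n, secondTypeDisc M i

/-- `μ` is a (complex) eigenvalue of the real matrix `A`, i.e. a complex root of
its characteristic polynomial. -/
def IsEigenvalueC {n : ℕ} (A : Matrix (Fin n) (Fin n) ℝ) (μ : ℂ) : Prop :=
  ((A.map ((↑) : ℝ → ℂ)).charpoly).IsRoot μ

/-- The `k`-th largest element (1-indexed) among the `n - 1` off-diagonal entries of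
column `j` of `B`. -/
noncomputable def kthLargestOffDiag {n : ℕ} (B : Matrix (Fin n) (Fin n) ℝ) (j : Fin n)
    (k : ℕ) : ℝ :=
  (sortDesc (((List.ofFn fun i : Fin n => B i j).eraseIdx j.val))).getD (k - 1) 0

/-- The ℓ_p norm of a vector in ℝ^n. -/
noncomputable def lpNorm {n : ℕ} (p : ℝ≥0∞) (x : Fin n → ℝ) : ℝ :=
  @norm (PiLp p fun _ : Fin n => ℝ) _ ((WithLp.equiv p (∀ _ : Fin n, ℝ)).symm x)

/-- The seminorm-like quantity `τ_p(B)`: the supremum of `‖Bᵀ x‖_p` over all real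
vectors `x` with `xᵀ e = 0` and `‖x‖_p = 1`. -/
noncomputable def tau {n : ℕ} (p : ℝ≥0∞) (B : Matrix (Fin n) (Fin n) ℝ) : ℝ :=
  sSup { t : ℝ | ∃ x : Fin n → ℝ, (∑ i, x i) = 0 ∧ lpNorm p x = 1 ∧ t = lpNorm p (Bᵀ *ᵥ x) }

/-- The Ostrowski–Brauer set `Γ(M)` of a real square matrix `M`. -/
noncomputable def brauerSet {n : ℕ} (M : Matrix (Fin n) (Fin n) ℝ) : Set ℂ :=
  ⋃ (i : Fin n) (j : Fin n) (_ : i < j),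
    { y : ℂ | ‖y - (M i i : ℝ)‖ * ‖y - (M j j : ℝ)‖ ≤
        (∑ k ∈ Finset.univ.filter fun k => k ≠ i, |M i k|) *
        (∑ k ∈ Finset.univ.filter fun k => k ≠ j, |M j k|) }

/-- `cs_j(A)` from Definition 2.3: sorted column sums difference. -/
noncomputable def csCol {n : ℕ} (A : Matrix (Fin n) (Fin n) ℝ) (j : Fin n) : ℝ :=
  halfSumDiff n (sortDesc (List.ofFn fun i : Fin n => A i j))

/-!
If `Bᵀ v = μ v` with `μ ≠ λ`, then `μ ∑ vᵢ = eᵀ Bᵀ v = λ ∑ vᵢ`, so the entries of `v` sum to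
zero. Subtracting a constant `c_k` from row `k` of `Bᵀ`, for every `k`, therefore leaves `Bᵀ v`
unchanged, and Gershgorin's theorem for the shifted matrix gives a `k` with
`|μ - b_kk| ≤ ∑_{j ≠ k} |b_jk - c_k| + |c_k|`: the sum of `|x - c_k|` over row `k` of `Bᵀ` with
its diagonal entry replaced by `0`. When `c_k` is a median of that row, this sum of absolute
deviations is exactly the second-type radius `r̂_k`.
-/

lemma sortDesc_pairwise (l : List ℝ) : (sortDesc l).Pairwise (· ≥ ·) :=
  List.pairwise_reverse.mpr (List.pairwise_insertionSort _ l)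

lemma sortDesc_perm (l : List ℝ) : (sortDesc l).Perm l :=
  (List.reverse_perm _).trans (List.perm_insertionSort _ _)

lemma List.sum_map_abs_sub_of_le {c : ℝ} {l : List ℝ} (h : ∀ x ∈ l, c ≤ x) :
    (l.map fun x => |x - c|).sum = l.sum - l.length * c := by
  induction l with
  | nil => simp
  | cons a t ih =>
    simp only [List.map_cons, List.sum_cons, List.length_cons, List.forall_mem_cons] at h ⊢
    rw [ih h.2, abs_of_nonneg (sub_nonneg.mpr h.1)]
    push_cast
    ring

lemma List.sum_map_abs_sub_of_ge {c : ℝ} {l : List ℝ} (h : ∀ x ∈ l, x ≤ c) :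
    (l.map fun x => |x - c|).sum = l.length * c - l.sum := by
  induction l with
  | nil => simp
  | cons a t ih =>
    simp only [List.map_cons, List.sum_cons, List.length_cons, List.forall_mem_cons] at h ⊢
    rw [ih h.2, abs_of_nonpos (sub_nonpos.mpr h.1)]
    push_cast
    ring

theorem List.Pairwise.sum_map_abs_sub_median {l : List ℝ} (hl : l.Pairwise (· ≥ ·)) :
    (l.map fun x => |x - l.getD ((l.length - 1) / 2) 0|).sum = halfSumDiff l.length l := by
  obtain rfl | hnil := eq_or_ne l []
  · simp [halfSumDiff]
  set n := l.length
  set m := (n - 1) / 2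
  have hm : m < n := by have := List.length_pos_iff.mpr hnil; omega
  set c := l.getD m 0
  have hc : c = l[m] := List.getD_eq_getElem l 0 hm
  have hdrop : l.drop m = c :: l.drop (m + 1) := by rw [hc]; exact List.drop_eq_getElem_cons hm
  have hsplit := hl
  rw [← List.take_append_drop m l, List.pairwise_append, hdrop, List.pairwise_cons] at hsplit
  obtain ⟨-, ⟨hdrop_le, -⟩, htake_ge⟩ := hsplit
  have htake : ∀ x ∈ l.take m, c ≤ x := fun x hx => htake_ge x hx c List.mem_cons_self
  have hdrop' : ∀ y ∈ l.drop m, y ≤ c := by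
    rw [hdrop]; exact List.forall_mem_cons.mpr ⟨le_rfl, hdrop_le⟩
  have hsum : (l.map fun x => |x - c|).sum =
      ((l.take m).sum - m * c) + ((n - m : ℕ) * c - (l.drop m).sum) := by
    conv_lhs => rw [← List.take_append_drop m l]
    rw [List.map_append, List.sum_append, List.sum_map_abs_sub_of_le htake,
      List.sum_map_abs_sub_of_ge hdrop', List.length_take, List.length_drop,
      Nat.min_eq_left hm.le]
  have htake_succ : (l.take (m + 1)).sum = (l.take m).sum + c := by
    rw [List.sum_take_succ l m hm, hc]
  rw [hsum, hdrop, List.sum_cons, Nat.cast_sub hm.le, halfSumDiff]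
  split_ifs with hpar
  · obtain ⟨h1, h2⟩ : (n - 1) / 2 = m ∧ (n + 1) / 2 = m + 1 := by omega
    have hn' : (n : ℝ) = 2 * m + 1 := by exact_mod_cast (by omega : n = 2 * m + 1)
    rw [h1, h2, hn']; ring
  · have h2 : n / 2 = m + 1 := by omega
    have hn' : (n : ℝ) = 2 * m + 2 := by exact_mod_cast (by omega : n = 2 * m + 2)
    rw [h2, htake_succ, hn']; ring

theorem exists_sum_abs_sub_add_abs_eq_secondTypeRadius {n : ℕ} (M : Matrix (Fin n) (Fin n) ℝ)
    (i : Fin n) :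
    ∃ c : ℝ, ∑ j ∈ Finset.univ.erase i, |M i j - c| + |c| = secondTypeRadius M i := by
  set f : Fin n → ℝ := fun j => if j = i then 0 else M i j
  set l := sortDesc (List.ofFn f)
  have hlen : l.length = n := by rw [(sortDesc_perm _).length_eq, List.length_ofFn]
  have hmed := (sortDesc_pairwise (List.ofFn f)).sum_map_abs_sub_median
  rw [hlen] at hmed
  refine ⟨l.getD ((n - 1) / 2) 0, ?_⟩
  rw [secondTypeRadius, ← hmed, ((sortDesc_perm _).map _).sum_eq, List.map_ofFn, List.sum_ofFn,
    ← Finset.sum_erase_add _ _ (Finset.mem_univ i)]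
  congr 1
  · refine Finset.sum_congr rfl fun j hj => ?_
    simp [f, l, Finset.ne_of_mem_erase hj]
  · simp [f, l]

theorem Matrix.exists_norm_sub_diag_le_of_sum_eq_zero {K ι : Type*} [NormedField K] [Fintype ι]
    [DecidableEq ι] {A : Matrix ι ι K} {μ : K} {v : ι → K}
    (hv : Module.End.HasEigenvector (toLin' A) μ v) (hsum : ∑ i, v i = 0) (c : ι → K) :
    ∃ k, ‖μ - A k k‖ ≤ ∑ j ∈ Finset.univ.erase k, ‖A k j - c k‖ + ‖c k‖ := by
  rw [Module.End.hasEigenvector_iff, Module.End.mem_eigenspace_iff, toLin'_apply] at hv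
  have hc : (of fun i _ => c i) *ᵥ v = 0 := by
    ext i
    simp [mulVec, dotProduct, ← Finset.mul_sum, hsum]
  have hshift : toLin' (A - of fun i _ => c i) v = μ • v := by
    rw [toLin'_apply, sub_mulVec, hc, sub_zero, hv.1]
  have hμ : Module.End.HasEigenvalue (toLin' (A - of fun i _ => c i)) μ :=
    Module.End.hasEigenvalue_of_hasEigenvector
      (Module.End.hasEigenvector_iff.mpr ⟨Module.End.mem_eigenspace_iff.mpr hshift, hv.2⟩)
  obtain ⟨k, hk⟩ := eigenvalue_mem_ball hμ
  refine ⟨k, ?_⟩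
  rw [mem_closedBall_iff_norm] at hk
  calc ‖μ - A k k‖ = ‖(μ - (A k k - c k)) - c k‖ := by ring_nf
    _ ≤ ‖μ - (A k k - c k)‖ + ‖c k‖ := norm_sub_le _ _
    _ ≤ ∑ j ∈ Finset.univ.erase k, ‖A k j - c k‖ + ‖c k‖ := by simpa using hk

theorem Matrix.sum_eq_zero_of_transpose_mulVec_eq_smul {K ι : Type*} [CommRing K] [IsDomain K]
    [Fintype ι] {B : Matrix ι ι K} {lam μ : K} {v : ι → K} (hB : B *ᵥ 1 = lam • 1)
    (hv : Bᵀ *ᵥ v = μ • v) (hne : μ ≠ lam) : ∑ i, v i = 0 := by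
  have h : μ * ∑ i, v i = lam * ∑ i, v i := by
    calc μ * ∑ i, v i = 1 ⬝ᵥ (Bᵀ *ᵥ v) := by rw [hv, dotProduct_smul, one_dotProduct, smul_eq_mul]
      _ = lam * ∑ i, v i := by
        rw [dotProduct_mulVec, vecMul_transpose, hB, smul_dotProduct, one_dotProduct, smul_eq_mul]
  exact (mul_eq_mul_right_iff.mp h).resolve_left hne

theorem IsEigenvalueC.hasEigenvalue_transpose {n : ℕ} {B : Matrix (Fin n) (Fin n) ℝ} {μ : ℂ}
    (h : IsEigenvalueC B μ) :
    Module.End.HasEigenvalue (toLin' (Bᵀ.map ((↑) : ℝ → ℂ))) μ := by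
  rwa [Module.End.hasEigenvalue_iff_isRoot_charpoly, charpoly_toLin', transpose_map,
    charpoly_transpose]

theorem stmt1_general {n : ℕ} (B : Matrix (Fin n) (Fin n) ℝ)
    (lam : ℝ) (hB : B *ᵥ (1 : Fin n → ℝ) = lam • (1 : Fin n → ℝ))
    (mu : ℂ) (hmu : IsEigenvalueC B mu) (hne : mu ≠ (lam : ℂ)) :
    mu ∈ secondTypeRegion Bᵀ := by
  obtain ⟨v, hv⟩ := hmu.hasEigenvalue_transpose.exists_hasEigenvector
  have hBC : B.map ((↑) : ℝ → ℂ) *ᵥ 1 = (lam : ℂ) • 1 := by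
    ext i
    have h := congrFun hB i
    simp only [mulVec, dotProduct, map_apply, Pi.one_apply, mul_one, Pi.smul_apply,
      smul_eq_mul] at h ⊢
    exact_mod_cast h
  have hsum : ∑ i, v i = 0 := by
    refine sum_eq_zero_of_transpose_mulVec_eq_smul hBC ?_ hne
    rw [← transpose_map, ← toLin'_apply, ← Module.End.mem_eigenspace_iff]
    exact hv.1
  choose c hc using exists_sum_abs_sub_add_abs_eq_secondTypeRadius Bᵀ
  obtain ⟨k, hk⟩ := exists_norm_sub_diag_le_of_sum_eq_zero hv hsum fun i => (c i : ℂ)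
  refine Set.mem_iUnion.mpr ⟨k, ?_⟩
  rw [secondTypeDisc, Metric.mem_closedBall, Complex.dist_eq, ← hc k]
  simpa [← Complex.ofReal_sub, Complex.norm_real] using hk

/-- Theorem 2: every eigenvalue of a real constant row-sum matrix `B`
other than the row sum `λ` lies in the Gershgorin region of the second type of `Bᵀ`. -/
theorem stmt1 {n : ℕ} (hn : 2 ≤ n) (B : Matrix (Fin n) (Fin n) ℝ)
    (lam : ℝ) (hB : B *ᵥ (1 : Fin n → ℝ) = lam • (1 : Fin n → ℝ))
    (mu : ℂ) (hmu : IsEigenvalueC B mu) (hne : mu ≠ (lam : ℂ)) :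
    mu ∈ secondTypeRegion Bᵀ :=
  stmt1_general B lam hB mu hmu hne
end

section
/- Let A be an n×n nonnegative irreducible matrix (n ≥ 2), let λ_p > 0 be its Perron eigenvalue (equal to its spectral radius) and let v_p be an associated Perron eigenvector, so that A v_p = λ_p v_p and every component of v_p is strictly positive. Let S = diag(v_p) and B = S^{-1} A S. Then every complex eigenvalue μ of A with μ ≠ λ_p lies in the Gershgorin region of the second type of B^T. -/
open Matrix
open scoped ENNReal

/-! The rescaled matrix `B = S⁻¹ A S` has every row sum equal to `λ_p`, so a left eigenvector `y`
of `B` for an eigenvalue `μ ≠ λ_p` is orthogonal to the all-ones vector: `Bᵀ y = μ y` with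
`∑ y_j = 0`. Choosing `i` with `|y_i|` maximal, the `i`-th row of `Bᵀ y = μ y` and `∑ y_j = 0`
give `(μ - b_ii) y_i = ∑_j (m_j - c) y_j` for every real `c`, where `m` is the `i`-th row of `Bᵀ`
with its diagonal entry replaced by `0`. Hence `|μ - b_ii| ≤ ∑_j |m_j - c|`, and for `c` a median of
the `m_j` the right-hand side is exactly the radius `r̂_i`. -/

namespace List

lemma sum_map_abs_sub_of_le_s3 {c : ℝ} {t : List ℝ} (h : ∀ a ∈ t, c ≤ a) :
    (t.map fun a => |a - c|).sum = t.sum - t.length * c := by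
  induction t with
  | nil => simp
  | cons a t ih =>
    simp only [forall_mem_cons] at h
    simp only [map_cons, sum_cons, length_cons, ih h.2, abs_of_nonneg (sub_nonneg.2 h.1)]
    push_cast; ring

lemma sum_map_abs_sub_of_ge_s3 {c : ℝ} {t : List ℝ} (h : ∀ a ∈ t, a ≤ c) :
    (t.map fun a => |a - c|).sum = t.length * c - t.sum := by
  induction t with
  | nil => simp
  | cons a t ih =>
    simp only [forall_mem_cons] at h
    simp only [map_cons, sum_cons, length_cons, ih h.2, abs_of_nonpos (sub_nonpos.2 h.1)]
    push_cast; ring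

lemma exists_sum_map_abs_sub_eq_halfSumDiff {l : List ℝ} (hl : l.Pairwise (· ≥ ·)) :
    ∃ c : ℝ, (l.map fun a => |a - c|).sum = halfSumDiff l.length l := by
  obtain rfl | hne := eq_or_ne l []
  · exact ⟨0, by simp [halfSumDiff]⟩
  set k := l.length / 2
  have hk : k < l.length := Nat.div_lt_self (length_pos_iff.2 hne) one_lt_two
  set c := l[k]
  refine ⟨c, ?_⟩
  have hupper : ∀ a ∈ l.take k, c ≤ a := by
    intro a ha
    obtain ⟨i, hi, rfl⟩ := mem_iff_getElem.1 ha
    rw [length_take] at hi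
    rw [getElem_take]
    exact hl.rel_get_of_le (a := ⟨i, by omega⟩) (b := ⟨k, hk⟩) (by simp; omega)
  have hlower : ∀ a ∈ l.drop k, a ≤ c := by
    intro a ha
    obtain ⟨i, hi, rfl⟩ := mem_iff_getElem.1 ha
    rw [length_drop] at hi
    rw [getElem_drop]
    exact hl.rel_get_of_le (a := ⟨k, hk⟩) (b := ⟨k + i, by omega⟩) (by simp)
  have hsplit : (l.map fun a => |a - c|).sum
      = (l.take k).sum - (l.drop k).sum + ((l.length : ℝ) - 2 * k) * c := by
    conv_lhs => rw [← take_append_drop k l]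
    rw [map_append, sum_append, sum_map_abs_sub_of_le_s3 hupper, sum_map_abs_sub_of_ge_s3 hlower,
      length_take, length_drop, min_eq_left hk.le, Nat.cast_sub hk.le]
    ring
  rw [hsplit, halfSumDiff]
  split_ifs with hodd
  · rw [drop_eq_getElem_cons hk, sum_cons, show (l.length - 1) / 2 = k by omega,
      show (l.length + 1) / 2 = k + 1 by omega,
      show (l.length : ℝ) = 2 * k + 1 by exact_mod_cast (show l.length = 2 * k + 1 by omega)]
    ring
  · rw [show (l.length : ℝ) = 2 * k by exact_mod_cast (show l.length = 2 * k by omega)]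
    ring

end List

lemma exists_sum_abs_sub_eq_secondTypeRadius {n : ℕ} (M : Matrix (Fin n) (Fin n) ℝ)
    (i : Fin n) : ∃ c : ℝ, ∑ j, |(if j = i then 0 else M i j) - c| = secondTypeRadius M i := by
  set row : Fin n → ℝ := fun j => if j = i then 0 else M i j
  obtain ⟨c, hc⟩ := List.exists_sum_map_abs_sub_eq_halfSumDiff (sortDesc_pairwise (List.ofFn row))
  refine ⟨c, ?_⟩
  rw [(sortDesc_perm (List.ofFn row)).length_eq, List.length_ofFn,
    ((sortDesc_perm _).map _).sum_eq, List.map_ofFn, List.sum_ofFn] at hc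
  exact hc

lemma sub_diag_mul_eq_sum_offDiag_sub_mul {ι : Type*} [Fintype ι] [DecidableEq ι]
    {M : Matrix ι ι ℝ} {x : ι → ℂ} {μ : ℂ} (hMx : M.map (↑) *ᵥ x = μ • x)
    (hsum : ∑ j, x j = 0) (i : ι) (c : ℝ) :
    (μ - M i i) * x i = ∑ j, (((if j = i then 0 else M i j) - c : ℝ) : ℂ) * x j := by
  have hrow : ∑ j, (M i j : ℂ) * x j = μ * x i := by
    simpa [mulVec, dotProduct] using congrFun hMx i
  have hoff : ∑ j, ((if j = i then 0 else M i j : ℝ) : ℂ) * x j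
      = ∑ j, (M i j : ℂ) * x j - M i i * x i := by
    rw [Fintype.sum_eq_add_sum_compl i,
      Fintype.sum_eq_add_sum_compl i (fun j => (M i j : ℂ) * x j)]
    simp only [if_pos, Complex.ofReal_zero, zero_mul, zero_add, add_sub_cancel_left]
    exact Finset.sum_congr rfl fun j hj => by rw [if_neg (by simpa using hj)]
  simp only [Complex.ofReal_sub, sub_mul, Finset.sum_sub_distrib, ← Finset.mul_sum, hsum,
    mul_zero, sub_zero, hoff, hrow]

lemma mem_secondTypeRegion_of_mulVec_eq_smul {n : ℕ} {M : Matrix (Fin n) (Fin n) ℝ}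
    {x : Fin n → ℂ} {μ : ℂ} (hx : x ≠ 0) (hsum : ∑ j, x j = 0)
    (hMx : M.map (↑) *ᵥ x = μ • x) : μ ∈ secondTypeRegion M := by
  obtain ⟨j₀, hj₀⟩ := Function.ne_iff.1 hx
  have : Nonempty (Fin n) := ⟨j₀⟩
  obtain ⟨i, hi⟩ := Finite.exists_max fun j => ‖x j‖
  have hxi : 0 < ‖x i‖ := (norm_pos_iff.2 hj₀).trans_le (hi j₀)
  obtain ⟨c, hc⟩ := exists_sum_abs_sub_eq_secondTypeRadius M i
  refine Set.mem_iUnion.2 ⟨i, ?_⟩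
  rw [secondTypeDisc, Metric.mem_closedBall, Complex.dist_eq, ← hc]
  refine le_of_mul_le_mul_right ?_ hxi
  calc ‖μ - M i i‖ * ‖x i‖ = ‖∑ j, (((if j = i then 0 else M i j) - c : ℝ) : ℂ) * x j‖ := by
        rw [← norm_mul, sub_diag_mul_eq_sum_offDiag_sub_mul hMx hsum]
    _ ≤ ∑ j, |(if j = i then 0 else M i j) - c| * ‖x j‖ := by
        refine (norm_sum_le _ _).trans_eq (Finset.sum_congr rfl fun j _ => ?_)
        rw [norm_mul, Complex.norm_real, Real.norm_eq_abs]
    _ ≤ (∑ j, |(if j = i then 0 else M i j) - c|) * ‖x i‖ := by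
        rw [Finset.sum_mul]
        gcongr with j
        exact hi j

namespace Matrix

variable {ι K : Type*} [Fintype ι] [Field K]

lemma exists_vecMul_eq_smul_of_isRoot_charpoly [DecidableEq ι] {M : Matrix ι ι K} {μ : K}
    (h : M.charpoly.IsRoot μ) : ∃ y ≠ 0, y ᵥ* M = μ • y := by
  rw [Polynomial.IsRoot.def, eval_charpoly, ← exists_vecMul_eq_zero_iff] at h
  obtain ⟨y, hy, hyM⟩ := h
  refine ⟨y, hy, ?_⟩
  rwa [vecMul_sub, sub_eq_zero, scalar_apply, ← smul_one_eq_diagonal, vecMul_smul, vecMul_one,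
    eq_comm] at hyM

lemma sum_eq_zero_of_vecMul_eq_smul {M : Matrix ι ι K} {c μ : K} {y : ι → K}
    (hM : M *ᵥ 1 = c • 1) (hy : y ᵥ* M = μ • y) (hμ : μ ≠ c) : ∑ i, y i = 0 := by
  have h := dotProduct_mulVec y M 1
  rw [hM, hy, smul_dotProduct, dotProduct_smul, dotProduct_one, smul_eq_mul, smul_eq_mul] at h
  exact (mul_eq_mul_right_iff.1 h).resolve_left hμ.symm

lemma diagonal_inv_mul_mul_diagonal_mulVec_one [DecidableEq ι] {A : Matrix ι ι K} {v : ι → K}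
    {c : K} (hv : ∀ i, v i ≠ 0) (hAv : A *ᵥ v = c • v) :
    ((diagonal v)⁻¹ * A * diagonal v) *ᵥ 1 = c • 1 := by
  have hunit : IsUnit (diagonal v).det := by simpa [det_diagonal, Finset.prod_ne_zero_iff] using hv
  have hdiag : diagonal v *ᵥ 1 = v := by ext i; simp [mulVec_diagonal]
  have hinv : (diagonal v)⁻¹ *ᵥ v = 1 := calc
    (diagonal v)⁻¹ *ᵥ v = (diagonal v)⁻¹ *ᵥ (diagonal v *ᵥ 1) := by rw [hdiag]
    _ = 1 := by rw [mulVec_mulVec, nonsing_inv_mul _ hunit, one_mulVec]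
  rw [← mulVec_mulVec, hdiag, ← mulVec_mulVec, hAv, mulVec_smul, hinv]

end Matrix

lemma IsEigenvalueC.inv_mul_mul {n : ℕ} {A S : Matrix (Fin n) (Fin n) ℝ} {μ : ℂ} (hS : IsUnit S)
    (h : IsEigenvalueC A μ) : IsEigenvalueC (S⁻¹ * A * S) μ := by
  have hmap (M : Matrix (Fin n) (Fin n) ℝ) :
      (M.map ((↑) : ℝ → ℂ)).charpoly = M.charpoly.map Complex.ofRealHom :=
    M.charpoly_map Complex.ofRealHom
  unfold IsEigenvalueC at *
  rwa [hmap, ← hS.unit_spec, Matrix.charpoly_units_conj', ← hmap]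

theorem stmt3_general {n : ℕ} (A : Matrix (Fin n) (Fin n) ℝ) (lamp : ℝ)
    (vp : Fin n → ℝ) (hvp : ∀ i, 0 < vp i) (hAv : A *ᵥ vp = lamp • vp)
    (S B : Matrix (Fin n) (Fin n) ℝ) (hS : S = Matrix.diagonal vp) (hB : B = S⁻¹ * A * S)
    (mu : ℂ) (hmu : IsEigenvalueC A mu) (hne : mu ≠ (lamp : ℂ)) :
    mu ∈ secondTypeRegion Bᵀ := by
  have hvp0 : ∀ i, vp i ≠ 0 := fun i => (hvp i).ne'
  have hrow : B *ᵥ 1 = lamp • 1 := by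
    rw [hB, hS]; exact diagonal_inv_mul_mul_diagonal_mulVec_one hvp0 hAv
  have hrowC : B.map ((↑) : ℝ → ℂ) *ᵥ 1 = (lamp : ℂ) • 1 := by
    ext i
    have := congrFun hrow i
    simp only [mulVec, dotProduct, map_apply, Pi.one_apply, mul_one, Pi.smul_apply,
      smul_eq_mul] at this ⊢
    exact_mod_cast this
  have hSunit : IsUnit S := by
    rw [hS, isUnit_diagonal]; exact Pi.isUnit_iff.2 fun i => (hvp0 i).isUnit
  obtain ⟨y, hy, hyB⟩ := exists_vecMul_eq_smul_of_isRoot_charpoly (hB ▸ hmu.inv_mul_mul hSunit)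
  refine mem_secondTypeRegion_of_mulVec_eq_smul hy (sum_eq_zero_of_vecMul_eq_smul hrowC hyB hne) ?_
  rwa [transpose_map, mulVec_transpose]

/-- Corollary 1: for a nonnegative irreducible matrix `A` with Perron
eigenpair `(λ_p, v_p)` (where `λ_p > 0` equals the spectral radius and `v_p > 0`),
every non-Perron eigenvalue of `A` lies in the Gershgorin region of the second type
of `Bᵀ`, where `B = S⁻¹ A S` and `S = diag v_p`. -/
theorem stmt3 {n : ℕ} (hn : 2 ≤ n) (A : Matrix (Fin n) (Fin n) ℝ)
    (hnonneg : ∀ i j, 0 ≤ A i j)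
    (hirr : ∀ i j : Fin n, ∃ k : ℕ, 0 < k ∧ 0 < (A ^ k) i j)
    (lamp : ℝ) (hlampos : 0 < lamp)
    (hperron : IsEigenvalueC A (lamp : ℂ))
    (hspec : ∀ mu : ℂ, IsEigenvalueC A mu → ‖mu‖ ≤ lamp)
    (vp : Fin n → ℝ) (hvp : ∀ i, 0 < vp i) (hAv : A *ᵥ vp = lamp • vp)
    (S B : Matrix (Fin n) (Fin n) ℝ) (hS : S = Matrix.diagonal vp) (hB : B = S⁻¹ * A * S)
    (mu : ℂ) (hmu : IsEigenvalueC A mu) (hne : mu ≠ (lamp : ℂ)) :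
    mu ∈ secondTypeRegion Bᵀ :=
  stmt3_general A lamp vp hvp hAv S B hS hB mu hmu hne
end

section
/- Let n be an even integer and let A be an n×n real matrix whose characteristic polynomial (over ℂ) has roots λ₁, λ₂, …, λ_n counted with multiplicity, where λ₁ is real and is associated with a real eigenvector v having no zero components. Let B = S^{-1} A S with S = diag(v). For each j, let β_j be the (n/2)-th largest element among the n−1 off-diagonal entries b_{1j}, …, b_{j−1,j}, b_{j+1,j}, …, b_{nj} of column j of B, and let F = [b_{ij} − β_j]. Then for every i ∈ {2, 3, …, n}, λ_i ∈ Γ(F) ∩ Γ(F^T), where the λ_i for i ≥ 2 are the roots (with multiplicity) of charpoly(A)/(X − λ₁). -/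
open Matrix
open scoped ENNReal

/-!
Since `A v = λ₁ v`, every row of `B = S⁻¹ A S` sums to `λ₁`, i.e. `B e = λ₁ e` for the
all-ones vector `e`, so `F = B - e βᵀ` is a rank-one deflation of `B` along an eigenvector.
By Brauer's theorem the spectrum of `F` is that of `A` with `λ₁` replaced by `λ₁ - Σⱼ βⱼ`;
thus `λ₂, …, λₙ` are eigenvalues of `F`, hence of `Fᵀ`, and the Ostrowski–Brauer theorem
places them in `Γ(F)` and `Γ(Fᵀ)`.
-/

open Polynomial

section Deflation

variable {R ι : Type*} [CommRing R] [Fintype ι] [DecidableEq ι]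

theorem charmatrix_sub_vecMulVec (B : Matrix ι ι R) (u w : ι → R) :
    charmatrix (B - vecMulVec u w) = charmatrix B + vecMulVec (C ∘ u) (C ∘ w) := by
  ext i j
  simp [charmatrix_apply, vecMulVec_apply, sub_add]

theorem charmatrix_mulVec_of_mulVec_eq_smul {B : Matrix ι ι R} {u : ι → R} {μ : R}
    (hu : B *ᵥ u = μ • u) : charmatrix B *ᵥ (C ∘ u) = (X - C μ) • (C ∘ u) := by
  ext i
  have h := RingHom.map_mulVec (C : R →+* R[X]) B u i
  rw [hu] at h
  rw [charmatrix, sub_mulVec, Pi.sub_apply, RingHom.mapMatrix_apply, ← h]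
  simp [sub_mul]

theorem det_smul_one_add_vecMulVec [Nonempty ι] (t : R) (u w : ι → R) :
    (t • (1 : Matrix ι ι R) + vecMulVec u w).det = t ^ (Fintype.card ι - 1) * (t + w ⬝ᵥ u) := by
  have h := eval_charpoly (vecMulVec (-u) w) t
  have hscalar : scalar ι t - vecMulVec (-u) w = t • 1 + vecMulVec u w := by
    ext i j
    simp [vecMulVec_apply, smul_one_eq_diagonal, diagonal_apply]
  rw [charpoly_vecMulVec, hscalar] at h
  rw [← h, ← Nat.sub_add_cancel (Fintype.card_pos (α := ι)), pow_succ]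
  simp [dotProduct_comm w u]
  ring

theorem charpoly_sub_vecMulVec_mul_X_sub_C [Nonempty ι] {B : Matrix ι ι R} {u : ι → R} {μ : R}
    (hu : B *ᵥ u = μ • u) (w : ι → R) :
    (B - vecMulVec u w).charpoly * (X - C μ) = B.charpoly * (X - C (μ - w ⬝ᵥ u)) := by
  set t : R[X] := X - C μ
  -- `(X - μ) (X - B + u wᵀ) = (X - B) ((X - μ) + u wᵀ)`, because `(X - B) u = (X - μ) u`.
  have hfactor : t • charmatrix (B - vecMulVec u w) =
      charmatrix B * (t • 1 + vecMulVec (C ∘ u) (C ∘ w)) := by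
    rw [charmatrix_sub_vecMulVec, Matrix.mul_add, mul_vecMulVec,
      charmatrix_mulVec_of_mulVec_eq_smul hu, Matrix.mul_smul, Matrix.mul_one, smul_add,
      smul_vecMulVec]
  have hdet := congrArg det hfactor
  rw [det_smul, det_mul, det_smul_one_add_vecMulVec] at hdet
  have hpow : t ^ Fintype.card ι = t ^ (Fintype.card ι - 1) * t := by
    rw [← pow_succ, Nat.sub_add_cancel Fintype.card_pos]
  have hdot : (C ∘ w) ⬝ᵥ (C ∘ u) = C (w ⬝ᵥ u) := by simp [dotProduct, map_sum]
  have hroot : X - C (μ - w ⬝ᵥ u) = t + C (w ⬝ᵥ u) := by rw [map_sub]; ring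
  rw [hpow, hdot] at hdet
  rw [hroot]
  have hmonic : (t ^ (Fintype.card ι - 1)).Monic := (monic_X_sub_C μ).pow _
  apply hmonic.isRegular.left
  simp only [charpoly]
  linear_combination hdet

theorem charpoly_inv_mul_mul {S : Matrix ι ι R} (hS : IsUnit S.det) (A : Matrix ι ι R) :
    (S⁻¹ * A * S).charpoly = A.charpoly := by
  rw [charpoly_mul_comm, ← Matrix.mul_assoc, mul_nonsing_inv _ hS, Matrix.one_mul]

end Deflation

theorem le_roots_of_mul_X_sub_C_eq {R : Type*} [CommRing R] [IsDomain R] {p q : R[X]} {a b : R}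
    {r : Multiset R} (h : p * (X - C a) = q * (X - C b)) (hq : q.roots = a ::ₘ r) :
    r ≤ p.roots := by
  have hq0 : q ≠ 0 := by rintro rfl; simp at hq
  have hp0 : p ≠ 0 := by
    rintro rfl
    exact mul_ne_zero hq0 (X_sub_C_ne_zero b) (by rw [← h, zero_mul])
  have hroots := congrArg roots h
  rw [roots_mul (mul_ne_zero hp0 (X_sub_C_ne_zero a)),
    roots_mul (mul_ne_zero hq0 (X_sub_C_ne_zero b)), roots_X_sub_C, roots_X_sub_C, hq,
    Multiset.cons_add, ← Multiset.singleton_add, add_comm] at hroots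
  rw [add_left_cancel hroots]
  exact Multiset.le_add_right _ _

section DiagonalScaling

variable {K ι : Type*} [Field K] [Fintype ι] [DecidableEq ι] {v : ι → K}

theorem isUnit_det_diagonal (hv : ∀ i, v i ≠ 0) : IsUnit (diagonal v).det := by
  rw [det_diagonal]
  exact isUnit_iff_ne_zero.mpr (Finset.prod_ne_zero_iff.mpr fun i _ => hv i)

theorem diagonal_conj_mulVec_one {A : Matrix ι ι K} {μ : K} (hv : ∀ i, v i ≠ 0)
    (hAv : A *ᵥ v = μ • v) :
    ((diagonal v)⁻¹ * A * diagonal v) *ᵥ (fun _ => 1) = μ • fun _ => 1 := by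
  have hv1 : diagonal v *ᵥ (fun _ => 1) = v := by ext i; simp [mulVec_diagonal]
  rw [← mulVec_mulVec, ← mulVec_mulVec, hv1, hAv, mulVec_smul]
  nth_rw 2 [← hv1]
  rw [mulVec_mulVec, nonsing_inv_mul _ (isUnit_det_diagonal hv), one_mulVec]

end DiagonalScaling

theorem mul_le_mul_of_cross_le {a b c d x y : ℝ} (ha : 0 ≤ a) (hb : 0 ≤ b) (hc : 0 ≤ c)
    (hd : 0 ≤ d) (hx : 0 < x) (hy : 0 ≤ y) (h₁ : a * x ≤ c * y) (h₂ : b * y ≤ d * x) :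
    a * b ≤ c * d := by
  rcases hy.eq_or_lt with rfl | hy
  · obtain rfl : a = 0 := by nlinarith
    simpa using mul_nonneg hc hd
  · refine le_of_mul_le_mul_right ?_ (mul_pos hx hy)
    nlinarith [mul_le_mul h₁ h₂ (mul_nonneg hb hy.le) (mul_nonneg hc hy.le)]

section Cassini

variable {K ι : Type*} [NormedField K] [Fintype ι] [DecidableEq ι]

theorem norm_sub_diag_mul_le_sum {A : Matrix ι ι K} {v : ι → K} {μ : K} (h : A *ᵥ v = μ • v)
    (i : ι) : ‖μ - A i i‖ * ‖v i‖ ≤ ∑ k ∈ Finset.univ.erase i, ‖A i k‖ * ‖v k‖ := by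
  have hrow : (μ - A i i) * v i = ∑ k ∈ Finset.univ.erase i, A i k * v k := by
    rw [Finset.sum_erase_eq_sub (Finset.mem_univ i), ← dotProduct, ← mulVec, h]
    simp [sub_mul]
  calc ‖μ - A i i‖ * ‖v i‖ = ‖∑ k ∈ Finset.univ.erase i, A i k * v k‖ := by
        rw [← hrow, norm_mul]
    _ ≤ ∑ k ∈ Finset.univ.erase i, ‖A i k‖ * ‖v k‖ :=
      (norm_sum_le _ _).trans_eq (by simp_rw [norm_mul])

theorem sum_norm_mul_le_of_le {A : Matrix ι ι K} {v : ι → K} {m : ℝ} {i : ι}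
    (hm : ∀ k ∈ Finset.univ.erase i, ‖v k‖ ≤ m) :
    ∑ k ∈ Finset.univ.erase i, ‖A i k‖ * ‖v k‖ ≤ (∑ k ∈ Finset.univ.erase i, ‖A i k‖) * m := by
  rw [Finset.sum_mul]
  exact Finset.sum_le_sum fun k hk => mul_le_mul_of_nonneg_left (hm k hk) (norm_nonneg _)

theorem eigenvalue_mem_cassini_oval [Nontrivial ι] {A : Matrix ι ι K} {μ : K}
    (hμ : Module.End.HasEigenvalue (toLin' A) μ) :
    ∃ i j, i ≠ j ∧ ‖μ - A i i‖ * ‖μ - A j j‖ ≤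
      (∑ k ∈ Finset.univ.erase i, ‖A i k‖) * (∑ k ∈ Finset.univ.erase j, ‖A j k‖) := by
  obtain ⟨v, hv⟩ := hμ.exists_hasEigenvector
  have hAv : A *ᵥ v = μ • v := by simpa using hv.apply_eq_smul
  obtain ⟨i, -, hi⟩ := Finset.exists_max_image Finset.univ (‖v ·‖) Finset.univ_nonempty
  obtain ⟨j, hj, hj_max⟩ := Finset.exists_max_image (Finset.univ.erase i) (‖v ·‖)
    Finset.univ_nontrivial.erase_nonempty
  have hvi : 0 < ‖v i‖ := by
    by_contra! h
    exact hv.2 (funext fun k => norm_le_zero_iff.mp ((hi k (Finset.mem_univ k)).trans h))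
  refine ⟨i, j, (Finset.ne_of_mem_erase hj).symm, mul_le_mul_of_cross_le (norm_nonneg _)
    (norm_nonneg _) (by positivity) (by positivity) hvi (norm_nonneg (v j)) ?_ ?_⟩
  · exact (norm_sub_diag_mul_le_sum hAv i).trans (sum_norm_mul_le_of_le hj_max)
  · exact (norm_sub_diag_mul_le_sum hAv j).trans
      (sum_norm_mul_le_of_le fun k _ => hi k (Finset.mem_univ k))

end Cassini

theorem mem_brauerSet_of_ne {n : ℕ} {M : Matrix (Fin n) (Fin n) ℝ} {μ : ℂ} {i j : Fin n}
    (hij : i ≠ j)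
    (h : ‖μ - (M i i : ℝ)‖ * ‖μ - (M j j : ℝ)‖ ≤
      (∑ k ∈ Finset.univ.erase i, |M i k|) * (∑ k ∈ Finset.univ.erase j, |M j k|)) :
    μ ∈ brauerSet M := by
  simp only [brauerSet, Set.mem_iUnion, Set.mem_ofPred_eq, Finset.filter_ne']
  rcases hij.lt_or_gt with hij | hji
  · exact ⟨i, j, hij, h⟩
  · exact ⟨j, i, hji, (mul_comm _ _).trans_le (h.trans_eq (mul_comm _ _))⟩

theorem mem_brauerSet_of_isRoot_charpoly {n : ℕ} (hn : 1 < n) (M : Matrix (Fin n) (Fin n) ℝ)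
    {μ : ℂ} (h : (M.map ((↑) : ℝ → ℂ)).charpoly.IsRoot μ) : μ ∈ brauerSet M := by
  have : Nontrivial (Fin n) := Fin.nontrivial_iff_two_le.mpr hn
  have hμ : Module.End.HasEigenvalue (toLin' (M.map ((↑) : ℝ → ℂ))) μ := by
    rwa [Module.End.hasEigenvalue_iff_isRoot_charpoly, Matrix.charpoly_toLin']
  obtain ⟨i, j, hij, hle⟩ := eigenvalue_mem_cassini_oval hμ
  simp only [map_apply, Complex.norm_real, Real.norm_eq_abs] at hle
  exact mem_brauerSet_of_ne hij hle

theorem stmt8_general {n : ℕ} (hn : 0 < n) (A : Matrix (Fin n) (Fin n) ℝ)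
    (lam : Fin n → ℂ)
    (hroots : ((A.map ((↑) : ℝ → ℂ)).charpoly).roots = Finset.univ.val.map lam)
    (lam1 : ℝ) (hlam1 : lam ⟨0, hn⟩ = (lam1 : ℂ))
    (v : Fin n → ℝ) (hv : ∀ i, v i ≠ 0) (hAv : A *ᵥ v = lam1 • v)
    (S B : Matrix (Fin n) (Fin n) ℝ) (hS : S = Matrix.diagonal v) (hB : B = S⁻¹ * A * S)
    (F : Matrix (Fin n) (Fin n) ℝ)
    (hF : ∀ i j, F i j = B i j - kthLargestOffDiag B j (n / 2))
    (i : Fin n) (hi : i ≠ ⟨0, hn⟩) :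
    lam i ∈ brauerSet F ∩ brauerSet Fᵀ := by
  have hn1 : 1 < n := by
    have := Fin.val_ne_of_ne hi
    omega
  have : Nonempty (Fin n) := ⟨i⟩
  set w : Fin n → ℝ := fun j => kthLargestOffDiag B j (n / 2)
  have hFB : F = B - vecMulVec (fun _ => 1) w := by
    ext a b
    simp [hF, vecMulVec_apply, w]
  have hBe : B *ᵥ (fun _ => 1) = lam1 • fun _ => 1 := hB ▸ hS ▸ diagonal_conj_mulVec_one hv hAv
  have hBA : B.charpoly = A.charpoly := hB ▸ hS ▸ charpoly_inv_mul_mul (isUnit_det_diagonal hv) A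
  have hdefl := congrArg (Polynomial.map Complex.ofRealHom)
    (charpoly_sub_vecMulVec_mul_X_sub_C hBe w)
  rw [← hFB, hBA, Polynomial.map_mul, Polynomial.map_mul, ← charpoly_map, ← charpoly_map] at hdefl
  simp only [Polynomial.map_sub, map_X, map_C] at hdefl
  have hrootsA : ((A.map ((↑) : ℝ → ℂ)).charpoly).roots =
      (lam1 : ℂ) ::ₘ (Finset.univ.erase ⟨0, hn⟩).val.map lam := by
    rw [hroots, ← hlam1, ← Multiset.map_cons, Finset.erase_val,
      Multiset.cons_erase (Finset.mem_univ _)]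
  have hFroot : ((F.map ((↑) : ℝ → ℂ)).charpoly).IsRoot (lam i) :=
    isRoot_of_mem_roots <| Multiset.mem_of_le (le_roots_of_mul_X_sub_C_eq hdefl hrootsA) <|
      Multiset.mem_map_of_mem lam (Finset.mem_erase.mpr ⟨hi, Finset.mem_univ i⟩)
  exact ⟨mem_brauerSet_of_isRoot_charpoly hn1 F hFroot,
    mem_brauerSet_of_isRoot_charpoly hn1 Fᵀ (by rwa [transpose_map, charpoly_transpose])⟩

/-- Theorem 8, even case: with `B = S⁻¹ A S`, `S = diag v`, and `F`
obtained by subtracting from each column `j` of `B` its `(n/2)`-th largest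
off-diagonal entry, all eigenvalues `λ₂, …, λ_n` of `A` other than `λ₁` lie in
`Γ(F) ∩ Γ(Fᵀ)`. -/
theorem stmt8 {n : ℕ} (hn : 0 < n) (heven : Even n) (A : Matrix (Fin n) (Fin n) ℝ)
    (lam : Fin n → ℂ)
    (hroots : ((A.map ((↑) : ℝ → ℂ)).charpoly).roots = Finset.univ.val.map lam)
    (lam1 : ℝ) (hlam1 : lam ⟨0, hn⟩ = (lam1 : ℂ))
    (v : Fin n → ℝ) (hv : ∀ i, v i ≠ 0) (hAv : A *ᵥ v = lam1 • v)
    (S B : Matrix (Fin n) (Fin n) ℝ) (hS : S = Matrix.diagonal v) (hB : B = S⁻¹ * A * S)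
    (F : Matrix (Fin n) (Fin n) ℝ)
    (hF : ∀ i j, F i j = B i j - kthLargestOffDiag B j (n / 2))
    (i : Fin n) (hi : i ≠ ⟨0, hn⟩) :
    lam i ∈ brauerSet F ∩ brauerSet Fᵀ :=
  stmt8_general hn A lam hroots lam1 hlam1 v hv hAv S B hS hB F hF i hi
end

section
/- Let n be an odd integer with n ≥ 3 and let A be an n×n real matrix whose characteristic polynomial (over ℂ) has roots λ₁, λ₂, …, λ_n counted with multiplicity, where λ₁ is real and is associated with a real eigenvector v having no zero components. Let B = S^{-1} A S with S = diag(v). For each j, let β_j and γ_j be, respectively, the opposite in sign of the ((n−1)/2)-th largest and of the ((n+1)/2)-th largest numbers among the n−1 off-diagonal entries b_{1j}, …, b_{j−1,j}, b_{j+1,j}, …, b_{nj} of column j of B, and let F = [b_{ij} + β_j] and G = [b_{ij} + γ_j]. Then for every i ∈ {2, 3, …, n}, λ_i ∈ Γ(F) ∩ Γ(F^T) ∩ Γ(G) ∩ Γ(G^T), where the λ_i for i ≥ 2 are the roots (with multiplicity) of charpoly(A)/(X − λ₁). -/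
open Matrix
open scoped ENNReal

/-!
Since `v` is an eigenvector of `A` with no zero entry, `B = S⁻¹ A S` has constant row sums
`λ₁`, i.e. `B e = λ₁ e` for the all-ones vector `e`. Adding any vector `c` to every row of `B`
is the rank-one update `B + e cᵀ`, and by Brauer's theorem this replaces the eigenvalue `λ₁`
by `λ₁ + cᵀ e` while keeping `λ₂, …, λ_n`. Hence each `λ_i`, `i ≥ 2`, is an eigenvalue of `F`
and of `G`, therefore also of their transposes, and the Ostrowski–Brauer theorem places it in
the four sets.
-/

open Finset Polynomial

namespace Matrix

variable {m : Type*} [Fintype m] [DecidableEq m]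

theorem det_sub_vecMulVec_mul_of_mulVec_eq_smul {R : Type*} [CommRing R] {M : Matrix m m R}
    (hM : IsUnit M.det) {u : m → R} {a : R} (hu : M *ᵥ u = a • u) (v : m → R) :
    (M - vecMulVec u v).det * a = M.det * (a - v ⬝ᵥ u) := by
  have hinv : a • (M⁻¹ *ᵥ u) = u := by
    rw [← mulVec_smul, ← hu, mulVec_mulVec, nonsing_inv_mul M hM, one_mulVec]
  rw [sub_eq_add_neg, ← neg_vecMulVec, vecMulVec_eq Unit,
    det_add_replicateCol_mul_replicateRow hM, Matrix.mul_assoc, ← replicateCol_mulVec,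
    replicateRow_mul_replicateCol, det_unique (1 + _), mul_assoc]
  congr 1
  conv_rhs => rw [← hinv, dotProduct_smul, smul_eq_mul]
  rw [add_apply, one_apply_eq, of_apply, mulVec_neg, dotProduct_neg]
  ring

theorem charpoly_add_vecMulVec_mul_X_sub_C {K : Type*} [Field K] [Infinite K] {B : Matrix m m K}
    {u : m → K} {l : K} (hu : B *ᵥ u = l • u) (c : m → K) :
    (B + vecMulVec u c).charpoly * (X - C l) = B.charpoly * (X - C (l + c ⬝ᵥ u)) := by
  apply eq_of_infinite_eval_eq
  refine (finite_setOfPred_isRoot B.charpoly_monic.ne_zero).infinite_compl.mono fun t ht => ?_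
  have hdet : IsUnit (scalar m t - B).det := isUnit_iff_ne_zero.2 (by rwa [← eval_charpoly])
  have htu : (scalar m t - B) *ᵥ u = (t - l) • u := by
    ext i
    simp [sub_mulVec, hu, sub_mul]
  simp only [Set.mem_ofPred_eq, eval_mul, eval_sub, eval_X, eval_C, eval_charpoly, ← sub_sub,
    det_sub_vecMulVec_mul_of_mulVec_eq_smul hdet htu]

theorem inv_diagonal_mul_mul_diagonal_mulVec_one {K : Type*} [Field K] {A : Matrix m m K}
    {v : m → K} (hv : ∀ i, v i ≠ 0) {l : K} (hAv : A *ᵥ v = l • v) :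
    ((diagonal v)⁻¹ * A * diagonal v) *ᵥ 1 = l • 1 := by
  have hv1 : diagonal v *ᵥ 1 = v := by
    ext k
    simp [mulVec_diagonal]
  have hdet : IsUnit (diagonal v).det :=
    isUnit_iff_ne_zero.2 (by simpa [det_diagonal, prod_ne_zero_iff] using hv)
  have hinv : (diagonal v)⁻¹ *ᵥ v = 1 :=
    calc (diagonal v)⁻¹ *ᵥ v = (diagonal v)⁻¹ *ᵥ (diagonal v *ᵥ 1) := by rw [hv1]
      _ = 1 := by rw [mulVec_mulVec, nonsing_inv_mul _ hdet, one_mulVec]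
  rw [← mulVec_mulVec, ← mulVec_mulVec, hv1, hAv, mulVec_smul, hinv]

end Matrix

theorem Polynomial.mem_roots_of_mul_X_sub_C_eq {R : Type*} [CommRing R] [IsDomain R]
    {p q : R[X]} {a w μ : R} (hq : q ≠ 0) (h : q * (X - C a) = p * (X - C w))
    (hp : {μ, a} ≤ p.roots) : μ ∈ q.roots := by
  have hqa : q * (X - C a) ≠ 0 := mul_ne_zero hq (X_sub_C_ne_zero a)
  have hroots := congrArg roots h
  rw [roots_mul hqa, roots_mul (h ▸ hqa), roots_X_sub_C, roots_X_sub_C] at hroots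
  have : {μ} + {a} ≤ q.roots + {a} := by
    rw [hroots, Multiset.singleton_add]
    exact hp.trans (Multiset.le_add_right _ _)
  exact Multiset.singleton_le.1 ((add_le_add_iff_right _).1 this)

namespace Matrix

variable {K n : Type*} [NormedField K] [Fintype n] [DecidableEq n] {A : Matrix n n K} {μ : K}
  {x : n → K}

theorem norm_sub_diag_mul_le_of_mulVec_eq_smul (hAx : A *ᵥ x = μ • x) (i : n) {b : ℝ}
    (hb : ∀ k ≠ i, ‖x k‖ ≤ b) :
    ‖μ - A i i‖ * ‖x i‖ ≤ (∑ k ∈ univ.erase i, ‖A i k‖) * b := by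
  have hrow : (μ - A i i) * x i = ∑ k ∈ univ.erase i, A i k * x k := by
    rw [sum_erase_eq_sub (mem_univ i), sub_mul, ← smul_eq_mul, ← Pi.smul_apply, ← hAx]
    rfl
  calc ‖μ - A i i‖ * ‖x i‖ = ‖∑ k ∈ univ.erase i, A i k * x k‖ := by rw [← norm_mul, hrow]
    _ ≤ ∑ k ∈ univ.erase i, ‖A i k‖ * ‖x k‖ := by
      simpa only [norm_mul] using norm_sum_le _ fun k => A i k * x k
    _ ≤ ∑ k ∈ univ.erase i, ‖A i k‖ * b :=
      sum_le_sum fun k hk => mul_le_mul_of_nonneg_left (hb k (ne_of_mem_erase hk)) (norm_nonneg _)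
    _ = (∑ k ∈ univ.erase i, ‖A i k‖) * b := (sum_mul _ _ _).symm

/-- Ostrowski–Brauer: take `x i`, `x j` to be the two entries of largest norm. -/
theorem exists_norm_sub_diag_mul_le_of_mulVec_eq_smul [Nontrivial n] (hx : x ≠ 0)
    (hAx : A *ᵥ x = μ • x) :
    ∃ i j, i ≠ j ∧ ‖μ - A i i‖ * ‖μ - A j j‖ ≤
      (∑ k ∈ univ.erase i, ‖A i k‖) * ∑ k ∈ univ.erase j, ‖A j k‖ := by
  obtain ⟨i, hi⟩ := Finite.exists_max fun k => ‖x k‖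
  obtain ⟨j₀, hj₀⟩ := exists_ne i
  obtain ⟨j, hj, hjmax⟩ := exists_max_image (univ.erase i) (fun k => ‖x k‖)
    ⟨j₀, mem_erase.2 ⟨hj₀, mem_univ _⟩⟩
  have hxi : 0 < ‖x i‖ := by
    by_contra! h
    exact hx (funext fun k => norm_le_zero_iff.1 ((hi k).trans h))
  have hrow_i := norm_sub_diag_mul_le_of_mulVec_eq_smul hAx i
    fun k hk => hjmax k (mem_erase.2 ⟨hk, mem_univ k⟩)
  have hrow_j := norm_sub_diag_mul_le_of_mulVec_eq_smul hAx j fun k _ => hi k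
  refine ⟨i, j, (ne_of_mem_erase hj).symm, ?_⟩
  have hRi : 0 ≤ ∑ k ∈ univ.erase i, ‖A i k‖ := sum_nonneg fun _ _ => norm_nonneg _
  have hRj : 0 ≤ ∑ k ∈ univ.erase j, ‖A j k‖ := sum_nonneg fun _ _ => norm_nonneg _
  rcases (norm_nonneg (x j)).eq_or_lt with hxj | hxj
  · have : ‖μ - A i i‖ = 0 := by nlinarith [norm_nonneg (μ - A i i)]
    rw [this, zero_mul]
    exact mul_nonneg hRi hRj
  · refine le_of_mul_le_mul_right ?_ (mul_pos hxi hxj)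
    nlinarith [mul_le_mul hrow_i hrow_j (by positivity) (by positivity)]

end Matrix

theorem mem_brauerSet_of_isEigenvalueC {n : ℕ} (hn : 2 ≤ n) {M : Matrix (Fin n) (Fin n) ℝ}
    {μ : ℂ} (hμ : IsEigenvalueC M μ) : μ ∈ brauerSet M := by
  have : Nontrivial (Fin n) := Fin.nontrivial_iff_two_le.2 hn
  have hdet : (scalar (Fin n) μ - M.map ((↑) : ℝ → ℂ)).det = 0 := by rwa [← eval_charpoly]
  obtain ⟨x, hx, hMx⟩ := exists_mulVec_eq_zero_iff.2 hdet
  rw [sub_mulVec, sub_eq_zero, scalar_apply, ← smul_one_eq_diagonal, smul_mulVec,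
    one_mulVec, eq_comm] at hMx
  obtain ⟨i, j, hij, hle⟩ := exists_norm_sub_diag_mul_le_of_mulVec_eq_smul hx hMx
  simp only [map_apply, Complex.norm_real, Real.norm_eq_abs] at hle
  simp only [brauerSet, Set.mem_iUnion, Set.mem_ofPred_eq, filter_ne']
  rcases hij.lt_or_gt with hlt | hlt
  · exact ⟨i, j, hlt, hle⟩
  · exact ⟨j, i, hlt, by rwa [mul_comm, mul_comm (∑ k ∈ univ.erase j, _)]⟩

theorem IsEigenvalueC.transpose {n : ℕ} {M : Matrix (Fin n) (Fin n) ℝ} {μ : ℂ}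
    (hμ : IsEigenvalueC M μ) : IsEigenvalueC Mᵀ μ := by
  rwa [IsEigenvalueC, transpose_map, charpoly_transpose]

theorem isEigenvalueC_of_add_row_const {n : ℕ} {B : Matrix (Fin n) (Fin n) ℝ} {l : ℝ}
    (hB : B *ᵥ 1 = l • 1) {μ : ℂ} (hμ : {μ, (l : ℂ)} ≤ (B.map ((↑) : ℝ → ℂ)).charpoly.roots)
    {F : Matrix (Fin n) (Fin n) ℝ} (c : Fin n → ℝ) (hF : ∀ i j, F i j = B i j + c j) :
    IsEigenvalueC F μ := by
  have hBC : B.map ((↑) : ℝ → ℂ) *ᵥ 1 = (l : ℂ) • 1 := by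
    ext i
    simpa [mulVec, dotProduct] using congrArg ((↑) : ℝ → ℂ) (congrFun hB i)
  have hFC : F.map ((↑) : ℝ → ℂ) = B.map ((↑) : ℝ → ℂ) + vecMulVec 1 fun j => (c j : ℂ) := by
    ext i j
    simp [hF]
  have hshift := charpoly_add_vecMulVec_mul_X_sub_C hBC fun j => (c j : ℂ)
  rw [← hFC] at hshift
  exact isRoot_of_mem_roots (mem_roots_of_mul_X_sub_C_eq (charpoly_monic _).ne_zero hshift hμ)

/-- Theorem 8, odd case: with `B = S⁻¹ A S`, `S = diag v`, and `F`, `G`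
built from the negatives of the `((n-1)/2)`-th and `((n+1)/2)`-th largest
off-diagonal column entries of `B`, all eigenvalues `λ₂, …, λ_n` of `A` other than
`λ₁` lie in `Γ(F) ∩ Γ(Fᵀ) ∩ Γ(G) ∩ Γ(Gᵀ)`. -/
theorem stmt9 {n : ℕ} (hn : 3 ≤ n) (A : Matrix (Fin n) (Fin n) ℝ)
    (lam : Fin n → ℂ)
    (hroots : ((A.map ((↑) : ℝ → ℂ)).charpoly).roots = Finset.univ.val.map lam)
    (lam1 : ℝ) (hlam1 : lam ⟨0, by omega⟩ = (lam1 : ℂ))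
    (v : Fin n → ℝ) (hv : ∀ i, v i ≠ 0) (hAv : A *ᵥ v = lam1 • v)
    (S B : Matrix (Fin n) (Fin n) ℝ) (hS : S = Matrix.diagonal v) (hB : B = S⁻¹ * A * S)
    (F G : Matrix (Fin n) (Fin n) ℝ)
    (hF : ∀ i j, F i j = B i j + -kthLargestOffDiag B j ((n - 1) / 2))
    (hG : ∀ i j, G i j = B i j + -kthLargestOffDiag B j ((n + 1) / 2))
    (i : Fin n) (hi : i ≠ ⟨0, by omega⟩) :
    lam i ∈ brauerSet F ∩ brauerSet Fᵀ ∩ brauerSet G ∩ brauerSet Gᵀ := by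
  have hSu : IsUnit S := hS ▸ isUnit_diagonal.2 (Pi.isUnit_iff.2 fun k => (hv k).isUnit)
  have hBe : B *ᵥ 1 = lam1 • 1 := hB ▸ hS ▸ inv_diagonal_mul_mul_diagonal_mulVec_one hv hAv
  have hcharpoly : (B.map ((↑) : ℝ → ℂ)).charpoly = (A.map ((↑) : ℝ → ℂ)).charpoly := by
    change (B.map Complex.ofRealHom).charpoly = (A.map Complex.ofRealHom).charpoly
    rw [charpoly_map, charpoly_map, hB, ← hSu.unit_spec, charpoly_units_conj']
  have hpair : {lam i, (lam1 : ℂ)} ≤ (B.map ((↑) : ℝ → ℂ)).charpoly.roots := by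
    have hsub : ({i, ⟨0, by omega⟩} : Multiset (Fin n)) ≤ univ.val :=
      (Multiset.le_iff_subset (by simpa using hi)).2 fun _ _ => mem_univ_val _
    rw [hcharpoly, hroots, ← hlam1]
    simpa using Multiset.map_le_map (f := lam) hsub
  have hmem (M : Matrix (Fin n) (Fin n) ℝ) (c : Fin n → ℝ) (hM : ∀ i j, M i j = B i j + c j) :
      lam i ∈ brauerSet M ∧ lam i ∈ brauerSet Mᵀ :=
    have hμ := isEigenvalueC_of_add_row_const hBe hpair c hM
    ⟨mem_brauerSet_of_isEigenvalueC (by omega) hμ,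
      mem_brauerSet_of_isEigenvalueC (by omega) hμ.transpose⟩
  obtain ⟨hF₁, hF₂⟩ := hmem F _ hF
  obtain ⟨hG₁, hG₂⟩ := hmem G _ hG
  exact ⟨⟨⟨hF₁, hF₂⟩, hG₁⟩, hG₂⟩
end
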